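/- arXiv:1504.01895 — 3 statements merged into one kernel-verified Lean document; each statement's English description precedes it below -/
import Mathlib

section
/- Let A be an algebraic heart of a bounded t-structure of a triangulated category D, with simple objects S₁,…,Sₙ, which can be tilted indefinitely. Then in any green sequence of A one tilts at each indecomposable object of A at most once. -/
open CategoryTheory Limits Pretriangulated

universe v u

namespace GreenSeqPaper

/-! ## Hearts of bounded t-structures, simple tilts, green sequences

We formalize hearts of bounded t-structures of a (pre)triangulated category `D`
concretely, as sets of objects `H : Set D` satisfying Bridgeland's
characterization: negative self-Homs vanish and every object of `D` is a finite
extension of shifts of objects of `H`.  Short exact sequences in the heart are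
exactly the distinguished triangles with all three vertices in the heart. -/


variable {D : Type u} [Category.{v} D] [Preadditive D] [Limits.HasZeroObject D]
  [HasShift D ℤ] [∀ n : ℤ, (CategoryTheory.shiftFunctor D n).Additive] [Pretriangulated D]

/-- The set of objects isomorphic to an `n`-fold shift of an object of `H`. -/
def shiftSet (H : Set D) (n : ℤ) : Set D := { X | ∃ Y ∈ H, Nonempty (X ≅ Y⟦n⟧) }

/-- `E` is an extension of `B` by `A`: there is a distinguished triangle
`A ⟶ E ⟶ B ⟶ A⟦1⟧`.  When `A`, `E`, `B` all lie in the heart of a t-structure,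
this says exactly that `0 ⟶ A ⟶ E ⟶ B ⟶ 0` is a short exact sequence in the heart. -/
def IsExt (A E B : D) : Prop :=
  ∃ (f : A ⟶ E) (g : E ⟶ B) (h : B ⟶ A⟦(1 : ℤ)⟧), Triangle.mk f g h ∈ distTriang D

/-- The objects of `D` generated from `H` by shifts and finitely many extensions. -/
inductive GeneratedBy (H : Set D) : D → Prop
  | zero {E : D} : IsZero E → GeneratedBy H E
  | shift {Y : D} (hY : Y ∈ H) (n : ℤ) {E : D} : Nonempty (E ≅ Y⟦n⟧) → GeneratedBy H E
  | ext {A E B : D} : GeneratedBy H A → GeneratedBy H B → IsExt A E B → GeneratedBy H E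

/-- `H` is (the set of objects of) the heart of a bounded t-structure on `D`
(Bridgeland's characterization of hearts of bounded t-structures). -/
structure IsHeart (H : Set D) : Prop where
  isoClosed : ∀ {X Y : D}, X ∈ H → (X ≅ Y) → Y ∈ H
  zero_mem : ∀ {X : D}, IsZero X → X ∈ H
  negHom : ∀ X ∈ H, ∀ Y ∈ H, ∀ n : ℤ, n < 0 → ∀ f : X ⟶ Y⟦n⟧, f = 0
  extClosed : ∀ {A E B : D}, A ∈ H → B ∈ H → IsExt A E B → E ∈ H
  generates : ∀ E : D, GeneratedBy H E

/-- A simple object of the abelian category `H`: it is nonzero and admits no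
short exact sequence `0 ⟶ A ⟶ S ⟶ B ⟶ 0` in `H` with both `A` and `B` nonzero. -/
def IsSimpleIn (H : Set D) (S : D) : Prop :=
  S ∈ H ∧ ¬ IsZero S ∧
    ∀ A B : D, A ∈ H → B ∈ H → IsExt A S B → IsZero A ∨ IsZero B

/-- `E ∈ H` has finite length: it admits a finite filtration with simple subquotients. -/
inductive FinLength (H : Set D) : D → Prop
  | zero {E : D} : IsZero E → FinLength H E
  | step {A E S : D} : A ∈ H → IsSimpleIn H S → IsExt A E S → FinLength H A → FinLength H E

/-- An algebraic heart: a heart of a bounded t-structure which has finite length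
and finitely many simple objects (up to isomorphism). -/
structure IsAlgebraicHeart (H : Set D) : Prop where
  heart : IsHeart H
  finLength : ∀ E ∈ H, FinLength H E
  finSimples : ∃ (n : ℕ) (f : Fin n → D), ∀ S : D, IsSimpleIn H S → ∃ i, Nonempty (S ≅ f i)

/-- `H` has exactly `n` simple objects up to isomorphism. -/
def HasNSimples (H : Set D) (n : ℕ) : Prop :=
  ∃ f : Fin n → D, (∀ i, IsSimpleIn H (f i)) ∧ (∀ i j, Nonempty (f i ≅ f j) → i = j) ∧
    ∀ S : D, IsSimpleIn H S → ∃ i, Nonempty (S ≅ f i)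

/-- A torsion pair `(T, F)` in the heart `H`. -/
structure IsTorsionPair (H T F : Set D) : Prop where
  subsetT : T ⊆ H
  subsetF : F ⊆ H
  isoClosedT : ∀ {X Y : D}, X ∈ T → (X ≅ Y) → Y ∈ T
  isoClosedF : ∀ {X Y : D}, X ∈ F → (X ≅ Y) → Y ∈ F
  hom_zero : ∀ t ∈ T, ∀ f ∈ F, ∀ φ : t ⟶ f, φ = 0
  ses : ∀ E ∈ H, ∃ t ∈ T, ∃ b ∈ F, IsExt t E b

/-- A torsion class in the heart `H`. -/
def IsTorsionClass (H T : Set D) : Prop := ∃ F, IsTorsionPair H T F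

/-- The Gabriel product `C₁ ⋆ C₂`: objects `E` admitting a short exact sequence
`0 ⟶ C₁ ⟶ E ⟶ C₂ ⟶ 0` with `Cᵢ ∈ 𝒞ᵢ`. -/
def gabriel (C₁ C₂ : Set D) : Set D := { E | ∃ A ∈ C₁, ∃ B ∈ C₂, IsExt A E B }

/-- The (left) tilt `⟨F, T[-1]⟩` of a heart with respect to a torsion pair `(T, F)`:
objects `E` with a distinguished triangle `f ⟶ E ⟶ t⟦-1⟧ ⟶ f⟦1⟧`, `f ∈ F`, `t ∈ T`;
equivalently (in terms of the cohomology objects `Hⁱ` with respect to the given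
t-structure) the objects `E` with `Hⁱ E = 0` for `i ∉ {0,1}`, `H⁰ E ∈ F`, `H¹ E ∈ T`. -/
def tilted (T F : Set D) : Set D := gabriel F (shiftSet T (-1))

/-- The extension closure `⟨S⟩` of a single object `S`. -/
inductive extGen (S : D) : D → Prop
  | zero {E : D} : IsZero E → extGen S E
  | of {E : D} : Nonempty (E ≅ S) → extGen S E
  | ext {A E B : D} : extGen S A → extGen S B → IsExt A E B → extGen S E

/-- The torsion-free class `{E ∈ H | Hom(S, E) = 0}` of the torsion pair `(⟨S⟩, F)`
associated to a simple object `S` of `H`. -/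
def torsionFreeOf (H : Set D) (S : D) : Set D := { E | E ∈ H ∧ ∀ f : S ⟶ E, f = 0 }

/-- The simple (left) tilt of the heart `H` at a simple object `S`. -/
def simpleTilt (H : Set D) (S : D) : Set D := tilted (setOf (extGen S)) (torsionFreeOf H S)

/-- The hearts obtained from `A` by finite sequences of simple tilts. -/
inductive Reachable (A : Set D) : Set D → Prop
  | refl : Reachable A A
  | tilt {H : Set D} {S : D} : Reachable A H → IsSimpleIn H S → Reachable A (simpleTilt H S)

/-- `A` can be tilted indefinitely: every heart obtained from `A` by a finite
sequence of simple tilts is again an algebraic heart with `n` simple objects. -/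
def TiltsIndefinitely (A : Set D) (n : ℕ) : Prop :=
  ∀ H : Set D, Reachable A H →
    IsHeart H ∧ (∀ E ∈ H, FinLength H E) ∧ HasNSimples H n

/-- A green sequence of the heart `A` of length `k`: a sequence of `k` simple
tilts starting at `A`, in which we strictly tilt at (simple) objects lying in `A`. -/
structure GreenSeq (A : Set D) (k : ℕ) where
  hearts : Fin (k + 1) → Set D
  simples : Fin k → D
  init : hearts 0 = A
  simple : ∀ i : Fin k, IsSimpleIn (hearts i.castSucc) (simples i)
  strict : ∀ i : Fin k, simples i ∈ A
  tilt : ∀ i : Fin k, hearts i.succ = simpleTilt (hearts i.castSucc) (simples i)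

/-- A green sequence is maximal if its last heart is the shifted heart `A[-1]`. -/
def GreenSeq.IsMaximal {A : Set D} {k : ℕ} (G : GreenSeq A k) : Prop :=
  G.hearts (Fin.last k) = shiftSet A (-1)

/-- An object `E` of the heart `H` is endo-trivial if `Hom_H(E,E)` is a skew field,
i.e. `E` is nonzero and every nonzero endomorphism of `E` is invertible. -/
def EndoTrivial (E : D) : Prop :=
  ¬ IsZero E ∧ ∀ f : E ⟶ E, f ≠ 0 → IsIso f

/-- `HasClass Sm E v`: the object `E` has class `v = ∑ vᵢ [Sm i]` in the
Grothendieck group of the heart, computed via a composition series with simple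
factors among the `Sm i`. -/
inductive HasClass {n : ℕ} (Sm : Fin n → D) : D → (Fin n → ℤ) → Prop
  | zero {E : D} : IsZero E → HasClass Sm E 0
  | step {A E : D} {i : Fin n} {v : Fin n → ℤ} :
      HasClass Sm A v → IsExt A E (Sm i) → HasClass Sm E (v + Pi.single i 1)

/-! Let `D^{≥0}(H)` be the co-aisle of a heart `H`: the extension closure of the shifts
`H⟦n⟧`, `n ≤ 0`. A simple tilt of `H` lies in `D^{≥0}(H)`, so every heart occurring after
step `i` of a sequence of simple tilts lies in `D^{≥0}` of the heart right after step `i`.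
That heart contains `Sᵢ⟦-1⟧`, and a heart has no nonzero maps from its positive shifts to
`D^{≥0}`. So if `Sⱼ ≅ Sᵢ` with `j > i`, then `Sⱼ ≅ (Sⱼ⟦-1⟧)⟦1⟧` has no nonzero
endomorphism, which is impossible for a simple object. -/

open ZeroObject

lemma IsExt.of_iso_mid {A E E' B : D} (h : IsExt A E B) (e : E ≅ E') : IsExt A E' B := by
  obtain ⟨f, g, w, hT⟩ := h
  refine ⟨f ≫ e.hom, e.inv ≫ g, w, isomorphic_distinguished _ hT _ ?_⟩
  refine Triangle.isoMk _ _ (Iso.refl _) e.symm (Iso.refl _) ?_ ?_ ?_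
  · show (f ≫ e.hom) ≫ e.inv = 𝟙 A ≫ f
    simp
  · show (e.inv ≫ g) ≫ 𝟙 B = e.inv ≫ g
    simp
  · show w ≫ (𝟙 A)⟦(1 : ℤ)⟧' = 𝟙 B ≫ w
    simp

lemma IsExt.shift {A E B : D} (h : IsExt A E B) (n : ℤ) : IsExt (A⟦n⟧) (E⟦n⟧) (B⟦n⟧) := by
  obtain ⟨f, g, w, hT⟩ := h
  exact ⟨_, _, _, Triangle.shift_distinguished _ hT n⟩

inductive Coaisle (H : Set D) : D → Prop
  | zero {E : D} : IsZero E → Coaisle H E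
  | shift {Y : D} (hY : Y ∈ H) (n : ℤ) (hn : n ≤ 0) {E : D} :
      Nonempty (E ≅ Y⟦n⟧) → Coaisle H E
  | ext {A E B : D} : Coaisle H A → Coaisle H B → IsExt A E B → Coaisle H E

namespace Coaisle

variable {H : Set D}

lemma of_iso {Y E : D} (hY : Coaisle H Y) (e : Y ≅ E) : Coaisle H E := by
  induction hY generalizing E with
  | zero h => exact .zero (h.of_iso e.symm)
  | shift hZ n hn h => exact .shift hZ n hn ⟨e.symm ≪≫ h.some⟩
  | ext hA hB hext => exact .ext hA hB (hext.of_iso_mid e)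

lemma of_mem {Y : D} (hY : Y ∈ H) : Coaisle H Y :=
  .shift hY 0 le_rfl ⟨((shiftFunctorZero D ℤ).app Y).symm⟩

lemma shift_of_nonpos {Y : D} (hY : Coaisle H Y) {n : ℤ} (hn : n ≤ 0) :
    Coaisle H (Y⟦n⟧) := by
  induction hY with
  | zero h => exact .zero ((shiftFunctor D n).map_isZero h)
  | @shift Z hZ m hm E h =>
      exact .shift hZ (m + n) (by omega)
        ⟨(shiftFunctor D n).mapIso h.some ≪≫ ((shiftFunctorAdd' D m n (m + n) rfl).app Z).symm⟩
  | ext _ _ hext ihA ihB => exact .ext ihA ihB (hext.shift n)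

lemma trans {H' : Set D} (h : ∀ E ∈ H', Coaisle H E) {Y : D} (hY : Coaisle H' Y) :
    Coaisle H Y := by
  induction hY with
  | zero h0 => exact .zero h0
  | shift hZ n hn e => exact ((h _ hZ).shift_of_nonpos hn).of_iso e.some.symm
  | ext _ _ hext ihA ihB => exact .ext ihA ihB hext

end Coaisle

namespace IsHeart

variable {H : Set D} (hH : IsHeart H)
include hH

lemma extGen_mem {S : D} (hS : S ∈ H) {t : D} (ht : extGen S t) : t ∈ H := by
  induction ht with
  | zero h => exact hH.zero_mem h
  | of h => exact hH.isoClosed hS h.some.symm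
  | ext _ _ hext ihA ihB => exact hH.extClosed ihA ihB hext

lemma coaisle_of_mem_simpleTilt {S E : D} (hS : S ∈ H) (hE : E ∈ simpleTilt H S) :
    Coaisle H E := by
  obtain ⟨f, hf, t', ⟨t, ht, ⟨e⟩⟩, hext⟩ := hE
  refine .ext (.of_mem hf.1) ?_ hext
  exact ((Coaisle.of_mem (hH.extGen_mem hS ht)).shift_of_nonpos (by omega)).of_iso e.symm

lemma shift_neg_one_mem_simpleTilt (S : D) : S⟦(-1 : ℤ)⟧ ∈ simpleTilt H S :=
  ⟨0, ⟨hH.zero_mem (isZero_zero D), fun f => (isZero_zero D).eq_of_tgt f 0⟩,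
    S⟦(-1 : ℤ)⟧, ⟨S, .of ⟨Iso.refl S⟩, ⟨Iso.refl _⟩⟩, ⟨0, 𝟙 _, 0, contractible_distinguished₁ _⟩⟩

lemma shift_hom_shift_eq_zero {T Z : D} (hT : T ∈ H) (hZ : Z ∈ H) {m n : ℤ} (hnm : n < m)
    (f : T⟦m⟧ ⟶ Z⟦n⟧) : f = 0 := by
  have h := hH.negHom T hT Z hZ (n - m) (by omega)
    ((shiftFunctorCompIsoId D m (-m) (by omega)).inv.app T ≫ f⟦-m⟧' ≫
      (shiftFunctorAdd' D n (-m) (n - m) (by omega)).inv.app Z)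
  rw [Preadditive.IsIso.comp_left_eq_zero, Preadditive.IsIso.comp_right_eq_zero] at h
  exact (shiftFunctor D (-m)).map_injective (by rw [h, Functor.map_zero])

lemma shift_hom_coaisle_eq_zero {T Y : D} (hT : T ∈ H) {m : ℤ} (hm : 1 ≤ m)
    (hY : Coaisle H Y) (f : T⟦m⟧ ⟶ Y) : f = 0 := by
  induction hY with
  | zero h => exact h.eq_of_tgt f 0
  | shift hZ n hn h =>
      rw [← Preadditive.IsIso.comp_right_eq_zero f h.some.hom]
      exact hH.shift_hom_shift_eq_zero hT hZ (by omega) _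
  | ext _ _ hext ihA ihB =>
      obtain ⟨u, v, w, hTr⟩ := hext
      obtain ⟨g, rfl⟩ := Triangle.coyoneda_exact₂ _ hTr f (ihB (f ≫ v))
      rw [ihA g]
      exact zero_comp

/-- `D^{≤-1} ∩ D^{≥0} = 0`. -/
lemma isZero_of_shift_neg_one_mem_of_coaisle {X : D} (hX : X⟦(-1 : ℤ)⟧ ∈ H)
    (hX' : Coaisle H X) : IsZero X := by
  have e := (shiftFunctorCompIsoId D (-1 : ℤ) 1 (by omega)).app X
  rw [IsZero.iff_id_eq_zero]
  calc 𝟙 X = e.inv ≫ e.hom := e.inv_hom_id.symm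
    _ = 0 := by rw [hH.shift_hom_coaisle_eq_zero hX le_rfl hX' e.hom, comp_zero]

end IsHeart

namespace GreenSeq

variable {A : Set D} {k : ℕ} (G : GreenSeq A k)

lemma reachable (i : Fin (k + 1)) : Reachable A (G.hearts i) := by
  induction i using Fin.induction with
  | zero => rw [G.init]; exact .refl
  | succ i ih => rw [G.tilt i]; exact .tilt ih (G.simple i)

lemma coaisle_of_le (hH : ∀ i, IsHeart (G.hearts i)) {a b : Fin (k + 1)} (hab : a ≤ b)
    {E : D} (hE : E ∈ G.hearts b) : Coaisle (G.hearts a) E := by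
  induction b using Fin.induction generalizing E with
  | zero => exact (nonpos_iff_eq_zero.1 hab) ▸ .of_mem hE
  | succ b ih =>
      rcases hab.eq_or_lt with rfl | hlt
      · exact .of_mem hE
      · rw [G.tilt b] at hE
        exact .trans (fun E' hE' => ih (Fin.le_castSucc_iff.2 hlt) hE')
          ((hH _).coaisle_of_mem_simpleTilt (G.simple b).1 hE)

lemma not_nonempty_iso_of_lt (hH : ∀ i, IsHeart (G.hearts i)) {i j : Fin k} (hij : i < j) :
    ¬ Nonempty (G.simples i ≅ G.simples j) := by
  rintro ⟨e⟩
  have hi : (G.simples i)⟦(-1 : ℤ)⟧ ∈ G.hearts i.succ :=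
    G.tilt i ▸ (hH _).shift_neg_one_mem_simpleTilt _
  have hj : (G.simples j)⟦(-1 : ℤ)⟧ ∈ G.hearts i.succ :=
    (hH _).isoClosed hi ((shiftFunctor D (-1 : ℤ)).mapIso e)
  have hj' : Coaisle (G.hearts i.succ) (G.simples j) :=
    G.coaisle_of_le hH (Fin.succ_le_castSucc_iff.2 hij) (G.simple j).1
  exact (G.simple j).2.1 ((hH _).isZero_of_shift_neg_one_mem_of_coaisle hj hj')

end GreenSeq

theorem green_seq_tilts_at_most_once_general
    (A : Set D) (n : ℕ)
    (hTilt : TiltsIndefinitely A n)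
    (k : ℕ) (G : GreenSeq A k) :
    ∀ i j : Fin k, Nonempty (G.simples i ≅ G.simples j) → i = j := by
  have hH : ∀ i, IsHeart (G.hearts i) := fun i => (hTilt _ (G.reachable i)).1
  intro i j hij
  by_contra hne
  rcases Ne.lt_or_gt hne with h | h
  · exact G.not_nonempty_iso_of_lt hH h hij
  · exact G.not_nonempty_iso_of_lt hH h (hij.map Iso.symm)

/-- Let `A` be an algebraic heart of a bounded t-structure of a
triangulated category `D`, with simple objects `S₁, …, Sₙ`, which can be tilted
indefinitely.  Then in any green sequence of `A` one tilts at each indecomposable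
object of `A` at most once (i.e. the tilting objects of a green sequence are
pairwise non-isomorphic). -/
theorem green_seq_tilts_at_most_once
    (A : Set D) (n : ℕ) (hA : IsAlgebraicHeart A) (hn : HasNSimples A n)
    (hTilt : TiltsIndefinitely A n)
    (k : ℕ) (G : GreenSeq A k) :
    ∀ i j : Fin k, Nonempty (G.simples i ≅ G.simples j) → i = j :=
  green_seq_tilts_at_most_once_general A n hTilt k G

end GreenSeqPaper
end

section
/- Let A be an algebraic heart of a bounded t-structure of a triangulated category D, with simple objects S₁,…,Sₙ, which can be tilted indefinitely. Then in any maximal green sequence of A one tilts at all n simple objects S₁,…,Sₙ of A. -/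
open CategoryTheory Limits Pretriangulated

universe v u

namespace GreenSeqPaper

/-! ## Hearts of bounded t-structures, simple tilts, green sequences

We formalize hearts of bounded t-structures of a (pre)triangulated category `D`
concretely, as sets of objects `H : Set D` satisfying Bridgeland's
characterization: negative self-Homs vanish and every object of `D` is a finite
extension of shifts of objects of `H`.  Short exact sequences in the heart are
exactly the distinguished triangles with all three vertices in the heart. -/


variable {D : Type u} [Category.{v} D] [Preadditive D] [Limits.HasZeroObject D]
  [HasShift D ℤ] [∀ n : ℤ, (CategoryTheory.shiftFunctor D n).Additive] [Pretriangulated D]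

/-! Let `S` be simple in `A`. By maximality `S⟦-1⟧` lies, and is simple, in the last heart
`A⟦-1⟧`, but it does not lie in the first heart `A`; so there is a step `Hᵢ ↝ Hᵢ₊₁ = μ_{Sᵢ} Hᵢ`
of the sequence with `S⟦-1⟧ ∈ Hᵢ₊₁` and `S⟦-1⟧ ∉ Hᵢ`. In `Hᵢ₊₁` the object `S⟦-1⟧` is an
extension `F ⟶ S⟦-1⟧ ⟶ t⟦-1⟧` with `F` torsion-free and `t ∈ ⟨Sᵢ⟩`. Both `F` and `t⟦-1⟧` lie in
every later heart: all later tilting objects lie in `A`, and negative extensions between objects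
of `A` vanish, so they admit no maps to `F` or `t⟦-1⟧`. Simplicity of `S⟦-1⟧` in the last heart
then forces `F = 0` (as `t⟦-1⟧ = 0` would give `S⟦-1⟧ ≅ F ∈ Hᵢ`), hence `S ≅ t ∈ ⟨Sᵢ⟩`, and
simplicity of `S` in `A` gives `S ≅ Sᵢ`. -/

open ZeroObject

lemma isExt_of_distTriang (T : Triangle D) (hT : T ∈ distTriang D)
    {A E B : D} (a : T.obj₁ ≅ A) (e : T.obj₂ ≅ E) (b : T.obj₃ ≅ B) : IsExt A E B := by
  refine ⟨a.inv ≫ T.mor₁ ≫ e.hom, e.inv ≫ T.mor₂ ≫ b.hom,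
    b.inv ≫ T.mor₃ ≫ a.hom⟦(1 : ℤ)⟧', isomorphic_distinguished _ hT _ ?_⟩
  refine Triangle.isoMk _ _ a.symm e.symm b.symm ?_ ?_ ?_
  · show (a.inv ≫ T.mor₁ ≫ e.hom) ≫ e.inv = a.inv ≫ T.mor₁
    simp
  · show (e.inv ≫ T.mor₂ ≫ b.hom) ≫ b.inv = e.inv ≫ T.mor₂
    simp
  · show (b.inv ≫ T.mor₃ ≫ a.hom⟦(1 : ℤ)⟧') ≫ a.inv⟦(1 : ℤ)⟧' = b.inv ≫ T.mor₃
    rw [Category.assoc, Category.assoc, ← Functor.map_comp, Iso.hom_inv_id,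
      CategoryTheory.Functor.map_id, Category.comp_id]

namespace IsExt

variable {A E B : D}

lemma of_iso (h : IsExt A E B) {A' E' B' : D} (a : A ≅ A') (e : E ≅ E') (b : B ≅ B') :
    IsExt A' E' B' :=
  let ⟨_, _, _, mem⟩ := h
  isExt_of_distTriang _ mem a e b

lemma shift_one (h : IsExt A E B) : IsExt (A⟦(1 : ℤ)⟧) (E⟦(1 : ℤ)⟧) (B⟦(1 : ℤ)⟧) :=
  let ⟨_, _, _, mem⟩ := h
  isExt_of_distTriang _ (rot_of_distTriang _ (rot_of_distTriang _ (rot_of_distTriang _ mem)))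
    (Iso.refl _) (Iso.refl _) (Iso.refl _)

lemma invRotate (h : IsExt A E B) : IsExt (B⟦(-1 : ℤ)⟧) A E :=
  let ⟨_, _, _, mem⟩ := h
  isExt_of_distTriang _ (inv_rot_of_distTriang _ mem) (Iso.refl _) (Iso.refl _) (Iso.refl _)

lemma nonempty_iso_of_isZero_left (h : IsExt A E B) (hA : IsZero A) : Nonempty (E ≅ B) := by
  obtain ⟨_, g, _, mem⟩ := h
  exact ⟨@asIso _ _ _ _ g ((Triangle.isZero₁_iff_isIso₂ _ mem).1 hA)⟩

lemma nonempty_iso_of_isZero_right (h : IsExt A E B) (hB : IsZero B) : Nonempty (A ≅ E) := by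
  obtain ⟨f, _, _, mem⟩ := h
  exact ⟨@asIso _ _ _ _ f ((Triangle.isZero₃_iff_isIso₁ _ mem).1 hB)⟩

lemma hom_eq_zero {X : D} (h : IsExt A E B) (hA : ∀ φ : X ⟶ A, φ = 0)
    (hB : ∀ φ : X ⟶ B, φ = 0) (φ : X ⟶ E) : φ = 0 := by
  obtain ⟨f, g, _, mem⟩ := h
  obtain ⟨ψ, rfl⟩ := Triangle.coyoneda_exact₂ _ mem φ (hB _)
  exact (congrArg (· ≫ f) (hA ψ)).trans zero_comp

end IsExt

omit [HasZeroObject D] [Pretriangulated D] in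
lemma isZero_shift_iff (X : D) (n : ℤ) : IsZero (X⟦n⟧) ↔ IsZero X := by
  rw [IsZero.iff_id_eq_zero, IsZero.iff_id_eq_zero, ← (shiftFunctor D n).map_id,
    Functor.map_eq_zero_iff]

omit [Preadditive D] [HasZeroObject D] [∀ n : ℤ, (shiftFunctor D n).Additive]
  [Pretriangulated D] in
lemma shift_mem_shiftSet {H : Set D} {a : ℤ} {Z : D} (hZ : Z ∈ shiftSet H a) (b : ℤ) :
    Z⟦b⟧ ∈ shiftSet H (a + b) :=
  let ⟨Y, hY, ⟨e⟩⟩ := hZ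
  ⟨Y, hY, ⟨(shiftFunctor D b).mapIso e ≪≫ ((shiftFunctorAdd D a b).app Y).symm⟩⟩

lemma mem_gabriel_of_iso {C₁ C₂ : Set D} {E E' : D} (hE : E ∈ gabriel C₁ C₂) (e : E ≅ E') :
    E' ∈ gabriel C₁ C₂ :=
  let ⟨A, hA, B, hB, hext⟩ := hE
  ⟨A, hA, B, hB, hext.of_iso (Iso.refl _) e (Iso.refl _)⟩

namespace IsHeart

variable {H : Set D} (hH : IsHeart H)
include hH

lemma hom_eq_zero_of_mem_shiftSet {X Z : D} {n : ℤ} (hX : X ∈ H) (hZ : Z ∈ shiftSet H n)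
    (hn : n < 0) (φ : X ⟶ Z) : φ = 0 := by
  obtain ⟨Y, hY, ⟨e⟩⟩ := hZ
  simpa using congrArg (· ≫ e.inv) (hH.negHom X hX Y hY n hn (φ ≫ e.hom))

lemma shift_neg_one_notMem {S : D} (hS : S ∈ H) (hS0 : ¬ IsZero S) : S⟦(-1 : ℤ)⟧ ∉ H :=
  fun h => hS0 <| (isZero_shift_iff S (-1)).1 <|
    (IsZero.iff_id_eq_zero _).2 (hH.negHom _ h S hS (-1) (by norm_num) (𝟙 _))

/-- In a triangle `F ⟶ E ⟶ B ⟶ F⟦1⟧` with `E, B ∈ H⟦-1⟧`, the object `F` lies in `H⟦-2⟧ ⋆ H⟦-1⟧`,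
which admits no maps from `H`. -/
lemma hom_eq_zero_of_isExt {X F E B : D} (hX : X ∈ H) (hE : E ∈ shiftSet H (-1))
    (hB : B ∈ shiftSet H (-1)) (h : IsExt F E B) (φ : X ⟶ F) : φ = 0 :=
  h.invRotate.hom_eq_zero
    (hH.hom_eq_zero_of_mem_shiftSet hX (shift_mem_shiftSet hB (-1)) (by norm_num))
    (hH.hom_eq_zero_of_mem_shiftSet hX hE (by norm_num)) φ

lemma mem_of_extGen {T t : D} (hT : T ∈ H) (h : extGen T t) : t ∈ H := by
  induction h with
  | zero h => exact hH.zero_mem h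
  | of h => exact hH.isoClosed hT h.some.symm
  | ext _ _ hext ih₁ ih₂ => exact hH.extClosed ih₁ ih₂ hext

end IsHeart

namespace IsSimpleIn

variable {H : Set D} {S : D}

lemma nonempty_iso_of_extGen (hH : IsHeart H) (hS : IsSimpleIn H S) {T t : D} (hT : T ∈ H)
    (ht : extGen T t) (e : S ≅ t) : Nonempty (S ≅ T) := by
  induction ht with
  | zero hz => exact absurd (hz.of_iso e) hS.2.1
  | of h => exact ⟨e ≪≫ h.some⟩
  | @ext t₁ t t₂ h₁ h₂ hext ih₁ ih₂ =>
    have hext' := hext.of_iso (Iso.refl t₁) e.symm (Iso.refl t₂)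
    rcases hS.2.2 t₁ t₂ (hH.mem_of_extGen hT h₁) (hH.mem_of_extGen hT h₂) hext' with hz | hz
    · exact ih₂ (hext'.nonempty_iso_of_isZero_left hz).some
    · exact ih₁ (hext'.nonempty_iso_of_isZero_right hz).some.symm

lemma shift_neg_one (hS : IsSimpleIn H S) : IsSimpleIn (shiftSet H (-1)) (S⟦(-1 : ℤ)⟧) := by
  have unshift : ∀ {W W' : D}, (W ≅ W'⟦(-1 : ℤ)⟧) → (W⟦(1 : ℤ)⟧ ≅ W') := fun e =>
    (shiftFunctor D (1 : ℤ)).mapIso e ≪≫ (shiftFunctorCompIsoId D (-1 : ℤ) 1 (by norm_num)).app _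
  refine ⟨⟨S, hS.1, ⟨Iso.refl _⟩⟩, fun h => hS.2.1 ((isZero_shift_iff S (-1)).1 h), ?_⟩
  rintro U V ⟨U', hU', ⟨eU⟩⟩ ⟨V', hV', ⟨eV⟩⟩ hext
  rcases hS.2.2 U' V' hU' hV'
    (hext.shift_one.of_iso (unshift eU) (unshift (Iso.refl _)) (unshift eV)) with hz | hz
  · exact Or.inl (((isZero_shift_iff U' (-1)).2 hz).of_iso eU)
  · exact Or.inr (((isZero_shift_iff V' (-1)).2 hz).of_iso eV)

end IsSimpleIn

lemma mem_simpleTilt_of_mem_torsionFreeOf {H : Set D} {S X : D}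
    (hX : X ∈ torsionFreeOf H S) : X ∈ simpleTilt H S :=
  ⟨X, hX, 0, ⟨0, extGen.zero (isZero_zero D),
    ⟨(isZero_zero D).iso ((isZero_shift_iff _ _).2 (isZero_zero D))⟩⟩,
    ⟨𝟙 X, 0, 0, contractible_distinguished X⟩⟩

lemma mem_simpleTilt_of_mem_shiftSet {H : Set D} {S B : D} (h0 : (0 : D) ∈ H)
    (hB : B ∈ shiftSet {E | extGen S E} (-1)) : B ∈ simpleTilt H S :=
  ⟨0, ⟨h0, fun _ => (isZero_zero D).eq_of_tgt _ _⟩, B, hB,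
    ⟨0, 𝟙 B, 0, contractible_distinguished₁ B⟩⟩

namespace GreenSeq

variable {A : Set D} {k : ℕ} (G : GreenSeq A k)

lemma zero_mem_hearts (hA : IsHeart A) (i : Fin (k + 1)) : (0 : D) ∈ G.hearts i := by
  induction i using Fin.induction with
  | zero => rw [G.init]; exact hA.zero_mem (isZero_zero D)
  | succ i ih =>
    rw [G.tilt i]
    exact mem_simpleTilt_of_mem_torsionFreeOf ⟨ih, fun _ => (isZero_zero D).eq_of_tgt _ _⟩

lemma isoClosed_hearts (hA : IsHeart A) (i : Fin (k + 1)) {X Y : D} (hX : X ∈ G.hearts i)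
    (e : X ≅ Y) : Y ∈ G.hearts i := by
  cases i using Fin.cases with
  | zero => rw [G.init] at hX ⊢; exact hA.isoClosed hX e
  | succ i => rw [G.tilt i] at hX ⊢; exact mem_gabriel_of_iso hX e

lemma mem_last_of_hom_eq_zero {X : D} (hX : ∀ j, ∀ φ : G.simples j ⟶ X, φ = 0)
    {i : Fin (k + 1)} (hXi : X ∈ G.hearts i) : X ∈ G.hearts (Fin.last k) := by
  induction i using Fin.reverseInduction with
  | last => exact hXi
  | cast i ih =>
    apply ih
    rw [G.tilt i]
    exact mem_simpleTilt_of_mem_torsionFreeOf ⟨hXi, hX i⟩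

variable {S : D}

lemma nonempty_iso_simples_or_mem_castSucc (hA : IsHeart A) (hmax : G.IsMaximal)
    (hS : IsSimpleIn A S) (i : Fin k) (hSi : S⟦(-1 : ℤ)⟧ ∈ G.hearts i.succ) :
    Nonempty (S ≅ G.simples i) ∨ S⟦(-1 : ℤ)⟧ ∈ G.hearts i.castSucc := by
  have hsucc : G.hearts i.succ = simpleTilt (G.hearts i.castSucc) (G.simples i) := G.tilt i
  rw [hsucc] at hSi
  obtain ⟨F, hF, B, ⟨t, ht, ⟨eB⟩⟩, hext⟩ := hSi
  have htA : t ∈ A := hA.mem_of_extGen (G.strict i) ht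
  have hBA : B ∈ shiftSet A (-1) := ⟨t, htA, ⟨eB⟩⟩
  have hSA : S⟦(-1 : ℤ)⟧ ∈ shiftSet A (-1) := ⟨S, hS.1, ⟨Iso.refl _⟩⟩
  have hFlast : F ∈ G.hearts (Fin.last k) :=
    G.mem_last_of_hom_eq_zero (i := i.succ)
      (fun j => hA.hom_eq_zero_of_isExt (G.strict j) hSA hBA hext)
      (hsucc ▸ mem_simpleTilt_of_mem_torsionFreeOf hF)
  have hBlast : B ∈ G.hearts (Fin.last k) :=
    G.mem_last_of_hom_eq_zero (i := i.succ)
      (fun j => hA.hom_eq_zero_of_mem_shiftSet (G.strict j) hBA (by norm_num))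
      (hsucc ▸ mem_simpleTilt_of_mem_shiftSet (G.zero_mem_hearts hA _) ⟨t, ht, ⟨eB⟩⟩)
  rw [hmax] at hFlast hBlast
  rcases hS.shift_neg_one.2.2 F B hFlast hBlast hext with hF0 | hB0
  · obtain ⟨e⟩ := hext.nonempty_iso_of_isZero_left hF0
    exact Or.inl (hS.nonempty_iso_of_extGen hA (G.strict i) ht
      ((shiftFunctor D (-1 : ℤ)).preimageIso (e ≪≫ eB)))
  · obtain ⟨e⟩ := hext.nonempty_iso_of_isZero_right hB0
    exact Or.inr (G.isoClosed_hearts hA _ hF.1 e)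

lemma exists_nonempty_iso_simples (hA : IsHeart A) (hmax : G.IsMaximal) (hS : IsSimpleIn A S)
    (i : Fin (k + 1)) (hSi : S⟦(-1 : ℤ)⟧ ∈ G.hearts i) : ∃ j, Nonempty (S ≅ G.simples j) := by
  induction i using Fin.induction with
  | zero => exact absurd (G.init ▸ hSi) (hA.shift_neg_one_notMem hS.1 hS.2.1)
  | succ i ih =>
    rcases G.nonempty_iso_simples_or_mem_castSucc hA hmax hS i hSi with h | h
    · exact ⟨i, h⟩
    · exact ih h

end GreenSeq

theorem maximal_green_seq_tilts_at_all_simples_general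
    (A : Set D) (hA : IsAlgebraicHeart A)
    (k : ℕ) (G : GreenSeq A k) (hmax : G.IsMaximal) :
    ∀ S : D, IsSimpleIn A S → ∃ j : Fin k, Nonempty (S ≅ G.simples j) := fun S hS =>
  G.exists_nonempty_iso_simples hA.heart hmax hS (Fin.last k)
    (hmax ▸ ⟨S, hS.1, ⟨Iso.refl _⟩⟩)

/-- Let `A` be an algebraic heart of a bounded t-structure of a
triangulated category `D`, with `n` simple objects, which can be tilted
indefinitely.  Then in any maximal green sequence of `A` one tilts at all `n`
simple objects of `A`: every simple object of `A` is isomorphic to one of the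
tilting objects of the sequence. -/
theorem maximal_green_seq_tilts_at_all_simples
    (A : Set D) (n : ℕ) (hA : IsAlgebraicHeart A) (hn : HasNSimples A n)
    (hTilt : TiltsIndefinitely A n)
    (k : ℕ) (G : GreenSeq A k) (hmax : G.IsMaximal) :
    ∀ S : D, IsSimpleIn A S → ∃ j : Fin k, Nonempty (S ≅ G.simples j) :=
  maximal_green_seq_tilts_at_all_simples_general A hA k G hmax

end GreenSeqPaper
end

section
/- Let A be a finite-dimensional algebra over an algebraically closed field k. If the module category A-mod has only finitely many bricks up to isomorphism (i.e. finite-dimensional modules E with End(E) = k), then A-mod has only finitely many torsion classes. -/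
/-!
A torsion class `T` is the left orthogonal of its torsion-free class, hence closed under
quotients and extensions. A nonzero module `M ∈ T` has a nonzero submodule in `T` of minimal
dimension; every nonzero endomorphism of it is injective (its image is again such a submodule),
so over an algebraically closed field it is a brick: subtracting an eigenvalue gives a
non-injective endomorphism, which must vanish. Splitting off such a brick and inducting on the
dimension of the quotient shows that `T` is determined by the bricks it contains, and with
finitely many bricks there are only finitely many such sets.
-/

open CategoryTheory Limits

universe v u

namespace GreenSeqPaper

section GeneralAlgebra

variable (k : Type) [Field k] [IsAlgClosed k] (R : Type) [Ring R] [Algebra k R]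

-- the scoped instances giving each `R`-module its canonical `k`-vector space structure
attribute [local instance] ModuleCat.moduleOfAlgebraModule
  ModuleCat.isScalarTower_of_algebra_moduleCat

/-- An `R`-module is an object of `R-mod` if it is finite-dimensional over `k`. -/
def FinDimMod (M : ModuleCat.{0} R) : Prop := FiniteDimensional k M

/-- A brick: a module `E` with `Hom_R(E, E) = k`, i.e. `E` is nonzero and every
endomorphism of `E` is multiplication by a scalar of `k`. -/
def IsBrickOver (M : ModuleCat.{0} R) : Prop :=
  (∃ m : M, m ≠ 0) ∧ ∀ f : M ⟶ M, ∃ c : k, ∀ m : M, f m = algebraMap k R c • m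

/-- `0 ⟶ X ⟶ E ⟶ Y ⟶ 0` is a short exact sequence of `R`-modules. -/
def ModSES (X E Y : ModuleCat.{0} R) : Prop :=
  ∃ (i : X ⟶ E) (p : E ⟶ Y), Function.Injective i ∧ Function.Surjective p ∧
    LinearMap.range i.hom = LinearMap.ker p.hom

/-- A torsion pair `(T, F)` in `R-mod` (the category of finite-dimensional left
`R`-modules): `Hom(T, F) = 0` for all `T ∈ T`, `F ∈ F`, and every module is an
extension of a torsion-free module by a torsion one. -/
structure IsModTorsionPair (T F : Set (ModuleCat.{0} R)) : Prop where
  subT : ∀ M ∈ T, FinDimMod k R M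
  subF : ∀ M ∈ F, FinDimMod k R M
  isoClosedT : ∀ {M N : ModuleCat.{0} R}, M ∈ T → Nonempty (M ≅ N) → N ∈ T
  isoClosedF : ∀ {M N : ModuleCat.{0} R}, M ∈ F → Nonempty (M ≅ N) → N ∈ F
  hom_zero : ∀ t ∈ T, ∀ f ∈ F, ∀ φ : t ⟶ f, φ = 0
  ses : ∀ E : ModuleCat.{0} R, FinDimMod k R E → ∃ t ∈ T, ∃ f ∈ F, ModSES R t E f

/-- A torsion class in `R-mod`: the torsion part of a torsion pair. -/
def IsModTorsionClass (T : Set (ModuleCat.{0} R)) : Prop := ∃ F, IsModTorsionPair k R T F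

open Module

theorem _root_.LinearMap.exists_comp_eq_of_ker_le {R M N Y : Type*} [Ring R] [AddCommGroup M]
    [Module R M] [AddCommGroup N] [Module R N] [AddCommGroup Y] [Module R Y] {p : M →ₗ[R] Y}
    (hp : Function.Surjective p) {q : M →ₗ[R] N} (h : LinearMap.ker p ≤ LinearMap.ker q) :
    ∃ ψ : Y →ₗ[R] N, ψ ∘ₗ p = q :=
  ⟨(LinearMap.ker p).liftQ q h ∘ₗ (p.quotKerEquivOfSurjective hp).symm.toLinearMap, by
    ext x; simp [LinearMap.quotKerEquivOfSurjective_symm_apply]⟩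

section

omit [IsAlgClosed k]
variable {k R}

namespace ModSES

variable {X E Y : ModuleCat.{0} R}

theorem finDimMod_left (hE : FinDimMod k R E) (h : ModSES R X E Y) : FinDimMod k R X :=
  have : FiniteDimensional k E := hE
  let ⟨i, _, hi, _⟩ := h
  FiniteDimensional.of_injective (i.hom.restrictScalars k) hi

theorem finDimMod_right (hE : FinDimMod k R E) (h : ModSES R X E Y) : FinDimMod k R Y :=
  have : FiniteDimensional k E := hE
  let ⟨_, p, _, hp, _⟩ := h
  Module.Finite.of_surjective (p.hom.restrictScalars k) hp

theorem finrank_add_finrank (hE : FinDimMod k R E) (h : ModSES R X E Y) :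
    finrank k X + finrank k Y = finrank k E := by
  have : FiniteDimensional k E := hE
  obtain ⟨i, p, hi, hp, hr⟩ := h
  have hi' : Function.Injective (i.hom.restrictScalars k) := hi
  have hp' : Function.Surjective (p.hom.restrictScalars k) := hp
  have hker : LinearMap.ker (p.hom.restrictScalars k) =
      LinearMap.range (i.hom.restrictScalars k) := by
    ext x; exact (SetLike.ext_iff.1 hr x).symm
  have := LinearMap.finrank_range_add_finrank_ker (p.hom.restrictScalars k)
  rw [LinearMap.range_eq_top.2 hp', finrank_top, hker, LinearMap.finrank_range_of_inj hi'] at this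
  omega

end ModSES

theorem isBrickOver_of_forall_injective [IsAlgClosed k] {N : ModuleCat.{0} R}
    [FiniteDimensional k N] [Nontrivial N]
    (hinj : ∀ f : N ⟶ N, f ≠ 0 → Function.Injective f) : IsBrickOver k R N := by
  refine ⟨exists_ne 0, fun f => ?_⟩
  obtain ⟨c, hc⟩ := End.exists_eigenvalue (f.hom.restrictScalars k)
  obtain ⟨v, hv⟩ := hc.exists_hasEigenvector
  have hg : f - c • 𝟙 N = 0 := by
    by_contra hne
    refine hv.2 (hinj _ hne ?_)
    simpa [sub_eq_zero] using hv.apply_eq_smul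
  refine ⟨c, fun m => sub_eq_zero.1 ?_⟩
  simpa [algebraMap_smul] using congr(($hg).hom m)

namespace IsModTorsionPair

variable {T F : Set (ModuleCat.{0} R)} (htp : IsModTorsionPair k R T F)
include htp

theorem mem_iff_of_iso {M N : ModuleCat.{0} R} (e : M ≅ N) : M ∈ T ↔ N ∈ T :=
  ⟨fun h => htp.isoClosedT h ⟨e⟩, fun h => htp.isoClosedT h ⟨e.symm⟩⟩

theorem mem_of_forall_hom_eq_zero {E : ModuleCat.{0} R} (hE : FinDimMod k R E)
    (h : ∀ f ∈ F, ∀ φ : E ⟶ f, φ = 0) : E ∈ T := by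
  obtain ⟨t, ht, f, hf, i, p, hi, -, hr⟩ := htp.ses E hE
  have hsurj : Function.Surjective i := fun x => by
    have : x ∈ LinearMap.ker p.hom := by simp [h f hf p]
    rwa [← hr] at this
  exact htp.isoClosedT ht ⟨(LinearEquiv.ofBijective i.hom ⟨hi, hsurj⟩).toModuleIso⟩

theorem zero_mem {M : ModuleCat.{0} R} (hM : FinDimMod k R M) [Subsingleton M] : M ∈ T :=
  htp.mem_of_forall_hom_eq_zero hM fun _ _ φ => by ext m; simp [Subsingleton.elim m 0]

theorem mem_of_surjective {M Q : ModuleCat.{0} R} (hM : M ∈ T) (hQ : FinDimMod k R Q)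
    (q : M ⟶ Q) (hq : Function.Surjective q) : Q ∈ T :=
  htp.mem_of_forall_hom_eq_zero hQ fun f hf φ => by
    have : Epi q := (ModuleCat.epi_iff_surjective q).2 hq
    rw [← cancel_epi q, htp.hom_zero M hM f hf (q ≫ φ), comp_zero]

theorem mem_of_modSES {X E Y : ModuleCat.{0} R} (hX : X ∈ T) (hY : Y ∈ T)
    (hE : FinDimMod k R E) (hses : ModSES R X E Y) : E ∈ T := by
  obtain ⟨i, p, -, hp, hr⟩ := hses
  refine htp.mem_of_forall_hom_eq_zero hE fun f hf φ => ?_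
  have hker : LinearMap.ker p.hom ≤ LinearMap.ker φ.hom := by
    rw [← hr]
    rintro _ ⟨x, rfl⟩
    simpa using congr(($(htp.hom_zero X hX f hf (i ≫ φ))).hom x)
  obtain ⟨ψ, hψ⟩ := LinearMap.exists_comp_eq_of_ker_le hp hker
  have hφ : φ = p ≫ ModuleCat.ofHom ψ := by ext; simp [← hψ]
  rw [hφ, htp.hom_zero Y hY f hf (ModuleCat.ofHom ψ), comp_zero]

theorem injective_of_ne_zero_of_finrank_minimal {N : ModuleCat.{0} R} (hN : N ∈ T)
    (hmin : ∀ N' ∈ T, Nontrivial N' → ∀ j : N' ⟶ N, Function.Injective j →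
      finrank k N ≤ finrank k N')
    (f : N ⟶ N) (hf : f ≠ 0) : Function.Injective f := by
  -- The image of `f` is a nonzero quotient of `N` (so in `T`) embedded in `N`, hence
  -- `dim N ≤ dim (im f)` and `ker f = 0`.
  let K := ModuleCat.of R (LinearMap.ker f.hom)
  let I := ModuleCat.of R (LinearMap.range f.hom)
  have hses : ModSES R K N I := ⟨ModuleCat.ofHom (LinearMap.ker f.hom).subtype,
    ModuleCat.ofHom f.hom.rangeRestrict, Subtype.val_injective,
    LinearMap.surjective_rangeRestrict _, by simp [K, I]⟩
  have hNfd := htp.subT N hN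
  have hI : I ∈ T := htp.mem_of_surjective hN (hses.finDimMod_right hNfd) _
    (LinearMap.surjective_rangeRestrict _)
  obtain ⟨m, hm⟩ : ∃ m, f m ≠ 0 := by
    by_contra! h
    exact hf (by ext m; exact h m)
  have : Nontrivial I := nontrivial_of_ne ⟨f m, m, rfl⟩ 0 (Subtype.coe_ne_coe.1 hm)
  have hle := hmin I hI this (ModuleCat.ofHom (LinearMap.range f.hom).subtype) Subtype.val_injective
  have hK : FiniteDimensional k K := hses.finDimMod_left hNfd
  have hK0 : finrank k K = 0 := by have := hses.finrank_add_finrank hNfd; omega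
  have : Subsingleton K := finrank_zero_iff.1 hK0
  exact LinearMap.ker_eq_bot.1 (Submodule.eq_bot_of_subsingleton)


theorem exists_brick_submodule [IsAlgClosed k] {M : ModuleCat.{0} R} (hM : M ∈ T)
    [Nontrivial M] : ∃ N ∈ T, IsBrickOver k R N ∧ ∃ j : N ⟶ M, Function.Injective j := by
  classical
  let P : ℕ → Prop := fun d =>
    ∃ N ∈ T, Nontrivial N ∧ ∃ j : N ⟶ M, Function.Injective j ∧ finrank k N = d
  have hP : ∃ d, P d := ⟨_, M, hM, inferInstance, 𝟙 M, Function.injective_id, rfl⟩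
  obtain ⟨N, hN, hNnt, j, hj, hNd⟩ := Nat.find_spec hP
  have : FiniteDimensional k N := htp.subT N hN
  refine ⟨N, hN, isBrickOver_of_forall_injective
    (htp.injective_of_ne_zero_of_finrank_minimal hN ?_), j, hj⟩
  intro N' hN' hN'nt j' hj'
  rw [hNd]
  exact Nat.find_min' hP ⟨N', hN', hN'nt, j' ≫ j, hj.comp hj', rfl⟩

theorem subset_of_forall_brick_mem [IsAlgClosed k] {T' F' : Set (ModuleCat.{0} R)}
    (htp' : IsModTorsionPair k R T' F') (hB : ∀ B ∈ T, IsBrickOver k R B → B ∈ T') :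
    T ⊆ T' := by
  intro M hM
  induction hd : finrank k M using Nat.strong_induction_on generalizing M with
  | _ d ih =>
  have hMfd := htp.subT M hM
  rcases subsingleton_or_nontrivial M with _ | _
  · exact htp'.zero_mem hMfd
  obtain ⟨N, hN, hNbrick, j, hj⟩ := htp.exists_brick_submodule hM
  let Q := ModuleCat.of R (M ⧸ LinearMap.range j.hom)
  have hses : ModSES R N M Q := ⟨j, ModuleCat.ofHom (LinearMap.range j.hom).mkQ, hj,
    Submodule.mkQ_surjective _, (Submodule.ker_mkQ _).symm⟩
  have hQ : Q ∈ T := htp.mem_of_surjective hM (hses.finDimMod_right hMfd) _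
    (Submodule.mkQ_surjective _)
  have : Nontrivial N := nontrivial_of_ne _ _ hNbrick.1.choose_spec
  have : FiniteDimensional k N := htp.subT N hN
  have := hses.finrank_add_finrank hMfd
  have := finrank_pos (R := k) (M := N)
  exact htp'.mem_of_modSES (hB N hN hNbrick) (ih _ (by omega) hQ rfl) hMfd hses

theorem eq_of_forall_brick_mem_iff [IsAlgClosed k] {T' F' : Set (ModuleCat.{0} R)}
    (htp' : IsModTorsionPair k R T' F')
    (hB : ∀ B, FinDimMod k R B → IsBrickOver k R B → (B ∈ T ↔ B ∈ T')) : T = T' :=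
  (htp.subset_of_forall_brick_mem htp' fun B hB' hb => (hB B (htp.subT B hB') hb).1 hB').antisymm
    (htp'.subset_of_forall_brick_mem htp fun B hB' hb => (hB B (htp'.subT B hB') hb).2 hB')

end IsModTorsionPair

end

theorem finitely_many_torsion_classes_of_finitely_many_bricks
    (hbricks : ∃ (n : ℕ) (g : Fin n → ModuleCat.{0} R),
      ∀ M : ModuleCat.{0} R, FinDimMod k R M → IsBrickOver k R M →
        ∃ i, Nonempty (M ≅ g i)) :
    { T : Set (ModuleCat.{0} R) | IsModTorsionClass k R T }.Finite := by
  obtain ⟨n, g, hg⟩ := hbricks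
  refine Set.Finite.of_finite_image (f := fun T => {i : Fin n | g i ∈ T}) (Set.toFinite _) ?_
  rintro T ⟨F, htp⟩ T' ⟨F', htp'⟩ hTT'
  refine htp.eq_of_forall_brick_mem_iff htp' fun B hB hb => ?_
  obtain ⟨i, ⟨e⟩⟩ := hg B hB hb
  rw [htp.mem_iff_of_iso e, htp'.mem_iff_of_iso e]
  exact Set.ext_iff.1 hTT' i

end GeneralAlgebra

end GreenSeqPaper
end
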